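/- arXiv:2411.13735 — 2 statements merged into one kernel-verified Lean document; each statement's English description precedes it below -/
import Mathlib

section
/- Let L be a length function on G. For every finitely supported a : G → ℂ and every finitely supported ξ : G → ℂ, the function g ↦ L(g)·(a*ξ)(g) − (a*(L·ξ))(g) belongs to ℓ^p(G) and satisfies ‖L·(a*ξ) − a*(L·ξ)‖_p^p ≤ ‖a‖₁^p · (Σ_{g ∈ supp(a)} L(g)^p) · ‖ξ‖_p^p, where (L·η)(g) = L(g)η(g) and supp(a) = {g ∈ G : a(g) ≠ 0}. In particular the commutator of the Dirac operator D_L (pointwise multiplication by L) with λ_p(a) extends to a bounded operator on ℓ^p(G). -/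
noncomputable section
open scoped ENNReal Topology
open Function Filter

/-- Convolution: `(a * ξ)(g) = ∑_{k ∈ G} a(k) ξ(k⁻¹ g)`.  For `a ∈ ℓ¹(G)` this is the
left regular representation `λ_p(a)` applied to `ξ`. -/
def conv {G : Type*} [Group G] (a ξ : G → ℂ) : G → ℂ :=
  fun g => ∑' k : G, a k * ξ (k⁻¹ * g)

/-- A length function on a group `G`. -/
def IsLengthFunction {G : Type*} [Group G] (L : G → ℝ) : Prop :=
  (∀ g, 0 ≤ L g) ∧ (∀ g, L g = 0 ↔ g = 1) ∧
    (∀ g h, L (g * h) ≤ L g + L h) ∧ (∀ g, L g⁻¹ = L g)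

/-- A proper length function on a group `G`: a length function all of whose sublevel sets
are finite. -/
def IsProperLengthFunction {G : Type*} [Group G] (L : G → ℝ) : Prop :=
  IsLengthFunction L ∧ ∀ R : ℝ, (L ⁻¹' Set.Icc 0 R).Finite

/-! The commutator `[D_L, λ(a)]` is the finite sum over `k ∈ supp a` of `a k` times the weighted
translation `ξ ↦ (g ↦ (L g - L (k⁻¹ g)) ξ (k⁻¹ g))`. Subadditivity and symmetry of `L` bound
the weight by `L k`, so each summand has norm at most `‖a k‖ L k` on `ℓ^p`; finally
`∑ ‖a k‖ L k ≤ ‖a‖₁ · max_{supp a} L ≤ ‖a‖₁ (∑_{supp a} L^p)^{1/p}`. -/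

section WeightedComposition

variable {α β 𝕜 : Type*} [NormedField 𝕜] {p : ℝ≥0∞}

theorem Memℓp.mul_comp_equiv (hp : 0 < p.toReal) {ξ : α → 𝕜} (hξ : Memℓp ξ p) (e : β ≃ α)
    {w : β → 𝕜} {C : ℝ} (hw : ∀ i, ‖w i‖ ≤ C) : Memℓp (fun i => w i * ξ (e i)) p := by
  have hξe : Memℓp (ξ ∘ e) p :=
    (memℓp_gen_iff hp).2 <| e.summable_iff.2 <| (memℓp_gen_iff hp).1 hξ
  refine (hξe.norm.const_mul C).mono fun i => ?_
  rw [norm_mul]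
  exact mul_le_mul_of_nonneg_right (hw i) (norm_nonneg _)

def lp.weightedComp (hp : 0 < p.toReal) (e : β ≃ α) (w : β → 𝕜) {C : ℝ}
    (hw : ∀ i, ‖w i‖ ≤ C) : lp (fun _ : α => 𝕜) p →ₗ[𝕜] lp (fun _ : β => 𝕜) p where
  toFun η := ⟨fun i => w i * η (e i), (lp.memℓp η).mul_comp_equiv hp e hw⟩
  map_add' _ _ := lp.ext <| funext fun _ => mul_add _ _ _
  map_smul' _ _ := lp.ext <| funext fun _ => mul_left_comm _ _ _

theorem lp.norm_weightedComp_le (hp : 0 < p.toReal) (e : β ≃ α) (w : β → 𝕜) {C : ℝ}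
    (hC : 0 ≤ C) (hw : ∀ i, ‖w i‖ ≤ C) (η : lp (fun _ : α => 𝕜) p) :
    ‖lp.weightedComp hp e w hw η‖ ≤ C * ‖η‖ := by
  refine lp.norm_le_of_tsum_le hp (mul_nonneg hC (lp.norm_nonneg' η)) ?_
  calc ∑' i, ‖w i * η (e i)‖ ^ p.toReal
      ≤ ∑' i, C ^ p.toReal * ‖η (e i)‖ ^ p.toReal := by
        refine Summable.tsum_le_tsum (fun i => ?_) ?_ ?_
        · rw [← Real.mul_rpow hC (norm_nonneg _), norm_mul]
          gcongr
          exact hw i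
        · exact (lp.memℓp (lp.weightedComp hp e w hw η)).summable hp
        · exact (e.summable_iff.2 ((lp.memℓp η).summable hp)).mul_left _
    _ = C ^ p.toReal * ‖η‖ ^ p.toReal := by
        rw [tsum_mul_left, e.tsum_eq (fun j => ‖η j‖ ^ p.toReal), lp.norm_rpow_eq_tsum hp]
    _ = (C * ‖η‖) ^ p.toReal := (Real.mul_rpow hC (lp.norm_nonneg' η)).symm

end WeightedComposition

theorem Finset.rpow_sum_mul_le {ι : Type*} (s : Finset ι) {f g : ι → ℝ} (hf : ∀ i ∈ s, 0 ≤ f i)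
    (hg : ∀ i ∈ s, 0 ≤ g i) {r : ℝ} (hr : 0 < r) :
    (∑ i ∈ s, f i * g i) ^ r ≤ (∑ i ∈ s, f i) ^ r * ∑ i ∈ s, g i ^ r := by
  have hgr : ∀ i ∈ s, 0 ≤ g i ^ r := fun i hi => Real.rpow_nonneg (hg i hi) r
  set M := (∑ i ∈ s, g i ^ r) ^ r⁻¹
  have hM : ∀ i ∈ s, g i ≤ M := fun i hi =>
    (Real.le_rpow_inv_iff_of_pos (hg i hi) (Finset.sum_nonneg hgr) hr).2
      (Finset.single_le_sum (f := fun j => g j ^ r) hgr hi)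
  calc (∑ i ∈ s, f i * g i) ^ r ≤ ((∑ i ∈ s, f i) * M) ^ r := by
        gcongr
        · exact Finset.sum_nonneg fun i hi => mul_nonneg (hf i hi) (hg i hi)
        · rw [Finset.sum_mul]
          exact Finset.sum_le_sum fun i hi => mul_le_mul_of_nonneg_left (hM i hi) (hf i hi)
    _ = (∑ i ∈ s, f i) ^ r * ∑ i ∈ s, g i ^ r := by
        rw [Real.mul_rpow (Finset.sum_nonneg hf)
          (Real.rpow_nonneg (Finset.sum_nonneg hgr) _),
          Real.rpow_inv_rpow (Finset.sum_nonneg hgr) hr.ne']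

section LengthCommutator

variable {G : Type*} [Group G]

theorem IsLengthFunction.abs_sub_le {L : G → ℝ} (hL : IsLengthFunction L) (k g : G) :
    |L g - L (k⁻¹ * g)| ≤ L k := by
  obtain ⟨-, -, hmul, hinv⟩ := hL
  have h₁ := hmul k (k⁻¹ * g)
  have h₂ := hmul k⁻¹ g
  rw [mul_inv_cancel_left] at h₁
  rw [hinv] at h₂
  exact abs_sub_le_iff.2 ⟨by linarith, by linarith⟩

theorem conv_eq_sum {a : G → ℂ} {s : Finset G} (hs : support a ⊆ s) (ξ : G → ℂ) (g : G) :
    conv a ξ g = ∑ k ∈ s, a k * ξ (k⁻¹ * g) :=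
  tsum_eq_sum fun k hk => by simp [notMem_support.1 fun h => hk (hs h)]

theorem mul_conv_sub_conv_mul_eq_sum (L : G → ℝ) {a : G → ℂ} {s : Finset G}
    (hs : support a ⊆ s) (ξ : G → ℂ) (g : G) :
    (L g : ℂ) * conv a ξ g - conv a (fun k => (L k : ℂ) * ξ k) g
      = ∑ k ∈ s, a k * (((L g - L (k⁻¹ * g) : ℝ) : ℂ) * ξ (k⁻¹ * g)) := by
  rw [conv_eq_sum hs, conv_eq_sum hs, Finset.mul_sum, ← Finset.sum_sub_distrib]
  refine Finset.sum_congr rfl fun k _ => ?_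
  push_cast
  ring

theorem IsLengthFunction.exists_commutator_clm {p : ℝ≥0∞} [Fact (1 ≤ p)] (hp : 0 < p.toReal)
    {L : G → ℝ} (hL : IsLengthFunction L) {a : G → ℂ} (ha : (support a).Finite) :
    ∃ T : lp (fun _ : G => ℂ) p →L[ℂ] lp (fun _ : G => ℂ) p, ∀ η,
      ⇑(T η) = (fun g => (L g : ℂ) * conv a η g - conv a (fun k => (L k : ℂ) * η k) g) ∧
      ‖T η‖ ≤ (∑ k ∈ ha.toFinset, ‖a k‖ * L k) * ‖η‖ := by
  have hw : ∀ k g, ‖((L g - L (k⁻¹ * g) : ℝ) : ℂ)‖ ≤ L k := fun k g => by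
    simpa only [Complex.norm_real, Real.norm_eq_abs] using hL.abs_sub_le k g
  let W k := lp.weightedComp hp (Equiv.mulLeft k⁻¹) _ (hw k)
  let T := ∑ k ∈ ha.toFinset, a k • W k
  have hT : ∀ η, ‖T η‖ ≤ (∑ k ∈ ha.toFinset, ‖a k‖ * L k) * ‖η‖ := fun η =>
    calc ‖T η‖ ≤ ∑ k ∈ ha.toFinset, ‖a k‖ * (L k * ‖η‖) := by
          rw [LinearMap.sum_apply]
          refine (norm_sum_le _ _).trans (Finset.sum_le_sum fun k _ => ?_)
          refine (norm_smul_le (a k) (W k η)).trans (mul_le_mul_of_nonneg_left ?_ (norm_nonneg _))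
          exact lp.norm_weightedComp_le hp _ _ (hL.1 k) (hw k) η
      _ = (∑ k ∈ ha.toFinset, ‖a k‖ * L k) * ‖η‖ := by
          simp only [Finset.sum_mul, mul_assoc]
  refine ⟨T.mkContinuous _ hT, fun η => ⟨funext fun g => ?_, hT η⟩⟩
  rw [mul_conv_sub_conv_mul_eq_sum L ha.coe_toFinset.ge, LinearMap.mkContinuous_apply, LinearMap.sum_apply, lp.coeFn_sum, Finset.sum_apply]
  rfl

end LengthCommutator

theorem stmt3_general (p : ℝ≥0∞) [Fact (1 ≤ p)] (hp' : p ≠ ∞)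
    {G : Type*} [Group G]
    (L : G → ℝ) (hL : IsLengthFunction L)
    (a : G → ℂ) (ha : (Function.support a).Finite) :
    (∀ ξ : G → ℂ, (Function.support ξ).Finite →
      Memℓp (fun g => (L g : ℂ) * conv a ξ g
        - conv a (fun k => (L k : ℂ) * ξ k) g) p ∧
      (∑' g : G, ‖(L g : ℂ) * conv a ξ g - conv a (fun k => (L k : ℂ) * ξ k) g‖ ^ p.toReal)
        ≤ (∑' g : G, ‖a g‖) ^ p.toReal * (∑ g ∈ ha.toFinset, L g ^ p.toReal) *
            ∑' g : G, ‖ξ g‖ ^ p.toReal) ∧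
    ∃ T : lp (fun _ : G => ℂ) p →L[ℂ] lp (fun _ : G => ℂ) p,
      ∀ (ξ : G → ℂ) (hs : (Function.support ξ).Finite) (hξ : Memℓp ξ p)
        (hF : Memℓp (fun g => (L g : ℂ) * conv a ξ g
          - conv a (fun k => (L k : ℂ) * ξ k) g) p),
        T ⟨ξ, hξ⟩ = ⟨_, hF⟩ := by
  have hp : 0 < p.toReal := ENNReal.toReal_pos (zero_lt_one.trans_le Fact.out).ne' hp'
  obtain ⟨T, hT⟩ := hL.exists_commutator_clm hp ha
  refine ⟨fun ξ hξ => ?_, T, fun ξ _ hξ _ => lp.ext (hT ⟨ξ, hξ⟩).1⟩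
  let η : lp (fun _ : G => ℂ) p := ⟨ξ, (memℓp_zero hξ).of_exponent_ge bot_le⟩
  have hTη : ∀ g, (L g : ℂ) * conv a ξ g - conv a (fun k => (L k : ℂ) * ξ k) g = T η g :=
    fun g => (congrFun (hT η).1 g).symm
  have hnorm_a : ∑' g, ‖a g‖ = ∑ k ∈ ha.toFinset, ‖a k‖ :=
    tsum_eq_sum fun k hk => by simpa using hk
  simp only [hTη, hnorm_a]
  refine ⟨lp.memℓp _, ?_⟩
  calc ∑' g, ‖T η g‖ ^ p.toReal = ‖T η‖ ^ p.toReal := (lp.norm_rpow_eq_tsum hp _).symm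
    _ ≤ ((∑ k ∈ ha.toFinset, ‖a k‖ * L k) * ‖η‖) ^ p.toReal := by gcongr; exact (hT η).2
    _ = (∑ k ∈ ha.toFinset, ‖a k‖ * L k) ^ p.toReal * ∑' g, ‖ξ g‖ ^ p.toReal := by
        rw [Real.mul_rpow (Finset.sum_nonneg fun k _ => mul_nonneg (norm_nonneg _) (hL.1 k))
          (norm_nonneg _), lp.norm_rpow_eq_tsum hp]
    _ ≤ _ := by
        gcongr
        exact Finset.rpow_sum_mul_le _ (fun k _ => norm_nonneg _) (fun k _ => hL.1 k) hp

theorem stmt3 (p : ℝ≥0∞) [Fact (1 ≤ p)] (hp' : p ≠ ∞)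
    {G : Type*} [Group G] [Countable G]
    (L : G → ℝ) (hL : IsLengthFunction L)
    (a : G → ℂ) (ha : (Function.support a).Finite) :
    (∀ ξ : G → ℂ, (Function.support ξ).Finite →
      Memℓp (fun g => (L g : ℂ) * conv a ξ g
        - conv a (fun k => (L k : ℂ) * ξ k) g) p ∧
      (∑' g : G, ‖(L g : ℂ) * conv a ξ g - conv a (fun k => (L k : ℂ) * ξ k) g‖ ^ p.toReal)
        ≤ (∑' g : G, ‖a g‖) ^ p.toReal * (∑ g ∈ ha.toFinset, L g ^ p.toReal) *
            ∑' g : G, ‖ξ g‖ ^ p.toReal) ∧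
    ∃ T : lp (fun _ : G => ℂ) p →L[ℂ] lp (fun _ : G => ℂ) p,
      ∀ (ξ : G → ℂ) (hs : (Function.support ξ).Finite) (hξ : Memℓp ξ p)
        (hF : Memℓp (fun g => (L g : ℂ) * conv a ξ g
          - conv a (fun k => (L k : ℂ) * ξ k) g) p),
        T ⟨ξ, hξ⟩ = ⟨_, hF⟩ :=
  stmt3_general p hp' L hL a ha
end
end

section
/- Let n ≤ m be nonnegative integers, let ξ ∈ L^p(μ_{≤n}) and η ∈ L^p(μ_{≥n+1}). Then the product function η₁ ⊗ η₂ : X_{≥0} → ℂ, (x_0,…,x_n,𝐱) ↦ ξ(x_0,…,x_n)·η(𝐱), belongs to L^p(μ_{≥0}) with ‖ξ ⊗ η‖_p = ‖ξ‖_p‖η‖_p, and P_m(ξ ⊗ η) equals the product function (x_0,…,x_n,𝐱) ↦ ξ(x_0,…,x_n)·(P_{m,n}η)(𝐱), where P_{m,n} : L^p(μ_{≥n+1}) → L^p(μ_{≥n+1}) is defined by (P_{m,n}ζ)(x_{n+1},…,x_m,𝐳) = ∫_{X_{≥m+1}} ζ(x_{n+1},…,x_m,𝐰) dμ_{≥m+1}(𝐰).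 -/
noncomputable section
open MeasureTheory Filter
open scoped ENNReal Topology

/-- A measure `ν` on a product space is *the* product of the measures `m i` if it assigns
the product value to every finite-dimensional cylinder set. -/
def IsProductMeasure {ι : Type*} {Y : ι → Type*} [∀ i, MeasurableSpace (Y i)]
    (m : ∀ i, Measure (Y i)) (ν : Measure (∀ i, Y i)) : Prop :=
  ∀ (F : Finset ι) (s : ∀ i, Set (Y i)), (∀ i, MeasurableSet (s i)) →
    ν {x | ∀ i ∈ F, x i ∈ s i} = ∏ i ∈ F, m i (s i)

variable {X : ℕ → Type*}

/-- The product measure `μ_{≤ n}` on `X_0 × ⋯ × X_n`. -/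
def muLe [∀ j, MeasurableSpace (X j)] (μ : ∀ j, Measure (X j)) (n : ℕ) :
    Measure (∀ j : Fin (n + 1), X j) :=
  Measure.pi (fun j => μ j)

/-- Splicing a point of `X_{≤ n}` with a point of `X_{≥ n+1}` gives a point of `X_{≥ 0}`. -/
def splice (n : ℕ) (x : ∀ j : Fin (n + 1), X j) (y : ∀ j : ℕ, X (n + 1 + j)) :
    ∀ j : ℕ, X j := fun j =>
  if h : j < n + 1 then x ⟨j, h⟩
  else cast (congrArg X (by omega : n + 1 + (j - (n + 1)) = j)) (y (j - (n + 1)))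

/-- The inclusion map `ι_n` at the level of functions: `(ι_n ξ)(x₀,…,xₙ,𝐱) = ξ(x₀,…,xₙ)`. -/
def iotaFun (n : ℕ) (ξ : (∀ j : Fin (n + 1), X j) → ℂ) : (∀ j : ℕ, X j) → ℂ :=
  fun x => ξ (fun j => x j)

/-- The projection map `π_n` at the level of functions:
`(π_n η)(x₀,…,xₙ) = ∫_{X_{≥ n+1}} η(x₀,…,xₙ,𝐱) dμ_{≥ n+1}(𝐱)`. -/
def piFun [∀ j, MeasurableSpace (X j)] (νtail : ∀ k, Measure (∀ j : ℕ, X (k + j)))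
    (n : ℕ) (η : (∀ j : ℕ, X j) → ℂ) : (∀ j : Fin (n + 1), X j) → ℂ :=
  fun x => ∫ y, η (splice n x y) ∂(νtail (n + 1))

/-- The idempotent `P_n = ι_n ∘ π_n` at the level of functions. -/
def PnFun [∀ j, MeasurableSpace (X j)] (νtail : ∀ k, Measure (∀ j : ℕ, X (k + j)))
    (n : ℕ) (η : (∀ j : ℕ, X j) → ℂ) : (∀ j : ℕ, X j) → ℂ :=
  iotaFun n (piFun νtail n η)

/-- `Q_0 = P_0` and `Q_n = P_n - P_{n-1}` for `n ≥ 1`, at the level of functions. -/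
def QnFun [∀ j, MeasurableSpace (X j)] (νtail : ∀ k, Measure (∀ j : ℕ, X (k + j))) :
    ℕ → ((∀ j : ℕ, X j) → ℂ) → ((∀ j : ℕ, X j) → ℂ)
  | 0 => PnFun νtail 0
  | n + 1 => fun η => PnFun νtail (n + 1) η - PnFun νtail n η

/-- The elementary tensor `ξ ⊗ η` of a function on `X_{≤ n}` and a function on `X_{≥ n+1}`,
as a function on `X_{≥ 0}`. -/
def tensFun (n : ℕ) (ξ : (∀ j : Fin (n + 1), X j) → ℂ)
    (η : (∀ j : ℕ, X (n + 1 + j)) → ℂ) : (∀ j : ℕ, X j) → ℂ :=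
  fun x => ξ (fun j => x j) * η (fun j => x (n + 1 + j))

/-- Splicing a point of `X_{(n,m]}` (the first `m - n` coordinates of `X_{≥ n+1}`) with a
point of `X_{≥ m+1}` gives a point of `X_{≥ n+1}`. -/
def spliceMid {n m : ℕ} (hnm : n ≤ m) (y : ∀ j : ℕ, X (n + 1 + j))
    (w : ∀ j : ℕ, X (m + 1 + j)) : ∀ j : ℕ, X (n + 1 + j) := fun j =>
  if h : j < m - n then y j
  else cast (congrArg X (by omega : m + 1 + (j - (m - n)) = n + 1 + j)) (w (j - (m - n)))

/-- The operator `P_{m,n}` on functions on `X_{≥ n+1}`: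
`(P_{m,n} ζ)(x_{n+1},…,x_m,𝐳) = ∫_{X_{≥ m+1}} ζ(x_{n+1},…,x_m,𝐰) dμ_{≥ m+1}(𝐰)`. -/
def PtailFun [∀ j, MeasurableSpace (X j)] (νtail : ∀ k, Measure (∀ j : ℕ, X (k + j)))
    {n m : ℕ} (hnm : n ≤ m) (ζ : (∀ j : ℕ, X (n + 1 + j)) → ℂ) :
    (∀ j : ℕ, X (n + 1 + j)) → ℂ :=
  fun y => ∫ w, ζ (spliceMid hnm y w) ∂(νtail (m + 1))

/-!
A measure that is a product measure in the sense of `IsProductMeasure` is Mathlib's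
`Measure.infinitePi`, since both are determined by their values on finite boxes. Splicing a
point of `X_{≤ n}` with a point of `X_{≥ n+1}` pushes `μ_{≤ n} ⊗ μ_{≥ n+1}` forward to `μ_{≥ 0}`
(compare them on boxes), so `x ↦ (x|_{≤ n}, x|_{≥ n+1})` is measure preserving and `ξ ⊗ η` is
the function `(a, b) ↦ ξ a * η b` on a product space, whose `L^p` norm factors by Tonelli.
The formula for `P_m` is pointwise: integrating out the coordinates beyond `m ≥ n` leaves the
first `n + 1` coordinates alone, so `ξ` comes out of the integral.
-/
open Set

section ProductNorm

variable {α β 𝕜 : Type*} [MeasurableSpace α] [MeasurableSpace β] {μ : Measure α}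
  {ν : Measure β} [SFinite ν] [NormedRing 𝕜] [NormMulClass 𝕜] {p : ℝ≥0∞} {f : α → 𝕜} {g : β → 𝕜}

theorem eLpNorm_prod_mul (hp : p ≠ ∞) (hf : AEStronglyMeasurable f μ)
    (hg : AEStronglyMeasurable g ν) :
    eLpNorm (fun q : α × β => f q.1 * g q.2) p (μ.prod ν) = eLpNorm f p μ * eLpNorm g p ν := by
  rcases eq_or_ne p 0 with rfl | hp0
  · simp
  simp only [eLpNorm_eq_lintegral_rpow_enorm_toReal hp0 hp, enorm_mul,
    ENNReal.mul_rpow_of_nonneg _ _ ENNReal.toReal_nonneg]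
  rw [lintegral_prod_mul (hf.enorm.pow_const _) (hg.enorm.pow_const _),
    ENNReal.mul_rpow_of_nonneg _ _ (by positivity)]

theorem MeasureTheory.MemLp.prod_mul (hp : p ≠ ∞) (hf : MemLp f p μ) (hg : MemLp g p ν) :
    MemLp (fun q : α × β => f q.1 * g q.2) p (μ.prod ν) :=
  ⟨(hf.1.comp_quasiMeasurePreserving Measure.quasiMeasurePreserving_fst).mul
      (hg.1.comp_quasiMeasurePreserving Measure.quasiMeasurePreserving_snd),
    by rw [eLpNorm_prod_mul hp hf.1 hg.1]; exact ENNReal.mul_lt_top hf.2 hg.2⟩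

end ProductNorm

theorem IsProductMeasure.eq_infinitePi {ι : Type*} {Y : ι → Type*} [∀ i, MeasurableSpace (Y i)]
    {m : ∀ i, Measure (Y i)} [∀ i, IsProbabilityMeasure (m i)] {ν : Measure (∀ i, Y i)}
    (hν : IsProductMeasure m ν) : ν = Measure.infinitePi m :=
  Measure.eq_infinitePi m hν

theorem splice_lt {n : ℕ} (x : ∀ j : Fin (n + 1), X j) (y : ∀ j : ℕ, X (n + 1 + j))
    {j : ℕ} (h : j < n + 1) : splice n x y j = x ⟨j, h⟩ := dif_pos h

theorem splice_add {n : ℕ} (x : ∀ j : Fin (n + 1), X j) (y : ∀ j : ℕ, X (n + 1 + j))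
    (j : ℕ) : splice n x y (n + 1 + j) = y j := by
  rw [splice, dif_neg (by omega)]
  exact eq_of_heq ((cast_heq _ _).trans (by rw [Nat.add_sub_cancel_left]))

theorem measurable_uncurry_splice [∀ j, MeasurableSpace (X j)] (n : ℕ) :
    Measurable (Function.uncurry (splice n : _ → _ → ∀ j, X j)) := by
  refine measurable_pi_lambda _ fun j => ?_
  by_cases h : j < n + 1
  · simp only [Function.uncurry, splice, dif_pos h]
    fun_prop
  · simp only [Function.uncurry, splice, dif_neg h]
    have hcast : ∀ {k} (e : k = j), Measurable (cast (congrArg X e)) := by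
      rintro _ rfl
      exact measurable_id
    exact (hcast (by omega)).comp (by fun_prop)

theorem uncurry_splice_preimage_pi (n : ℕ) (F : Finset ℕ) (s : ∀ i, Set (X i)) :
    Function.uncurry (splice n) ⁻¹' (F : Set ℕ).pi s =
      (↑(F.preimage (Fin.val : Fin (n + 1) → ℕ) Fin.val_injective.injOn) : Set (Fin (n + 1))).pi
          (fun i => s i) ×ˢ
        ((F.preimage (n + 1 + ·) (add_right_injective _).injOn : Finset ℕ) : Set ℕ).pi
          (fun j => s (n + 1 + j)) := by
  ext ⟨x, y⟩
  simp only [mem_preimage, Function.uncurry_apply_pair, Set.mem_pi, Finset.mem_coe, mem_prod,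
    Finset.mem_preimage]
  constructor
  · intro h
    exact ⟨fun i hi => splice_lt x y i.2 ▸ h i hi, fun j hj => splice_add x y j ▸ h _ hj⟩
  · rintro ⟨hx, hy⟩ i hi
    rcases lt_or_ge i (n + 1) with hin | hin
    · exact (splice_lt x y hin).symm ▸ hx ⟨i, hin⟩ hi
    · obtain ⟨j, rfl⟩ := Nat.exists_eq_add_of_le hin
      exact (splice_add x y j).symm ▸ hy j hi

theorem map_uncurry_splice_prod [∀ j, MeasurableSpace (X j)] (μ : ∀ j, Measure (X j))
    [∀ j, IsProbabilityMeasure (μ j)] (n : ℕ) :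
    ((muLe μ n).prod (Measure.infinitePi fun j => μ (n + 1 + j))).map
      (Function.uncurry (splice n)) = Measure.infinitePi μ := by
  classical
  refine Measure.eq_infinitePi μ fun F s hs => ?_
  rw [Measure.map_apply (measurable_uncurry_splice n) (.pi F.countable_toSet fun i _ => hs i),
    uncurry_splice_preimage_pi, Measure.prod_prod, muLe, Measure.pi_pi_finset,
    Measure.infinitePi_pi _ (fun j _ => hs _), Finset.prod_preimage' _ _ _ fun i => μ i (s i),
    Finset.prod_preimage' _ _ _ fun i => μ i (s i),
    ← Finset.prod_filter_mul_prod_filter_not F (· ∈ range (Fin.val : Fin (n + 1) → ℕ))]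
  congr 1
  refine Finset.prod_congr (Finset.filter_congr fun i _ => ?_) fun _ _ => rfl
  simpa using ⟨fun ⟨j, hj⟩ => by omega, fun h => ⟨i - (n + 1), by omega⟩⟩

theorem measurePreserving_restrict_prod_shift [∀ j, MeasurableSpace (X j)]
    (μ : ∀ j, Measure (X j)) [∀ j, IsProbabilityMeasure (μ j)] (n : ℕ) :
    MeasurePreserving (fun x : ∀ j, X j => ((fun j : Fin (n + 1) => x j), fun j => x (n + 1 + j)))
      (Measure.infinitePi μ) ((muLe μ n).prod (Measure.infinitePi fun j => μ (n + 1 + j))) := by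
  have hsplit : (fun x : ∀ j, X j => ((fun j : Fin (n + 1) => x j), fun j => x (n + 1 + j))) ∘
      Function.uncurry (splice n) = id :=
    funext fun ⟨x, y⟩ => Prod.ext (funext fun j => splice_lt x y j.2) (funext (splice_add x y))
  refine ⟨by fun_prop, ?_⟩
  rw [← map_uncurry_splice_prod μ n, Measure.map_map (by fun_prop) (measurable_uncurry_splice n),
    hsplit, Measure.map_id]

theorem splice_add_eq_spliceMid {n m : ℕ} (hnm : n ≤ m) (x : ∀ j : ℕ, X j)
    (w : ∀ j : ℕ, X (m + 1 + j)) (j : ℕ) :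
    splice m (fun i : Fin (m + 1) => x i) w (n + 1 + j)
      = spliceMid hnm (fun i => x (n + 1 + i)) w j := by
  by_cases h : j < m - n
  · rw [splice_lt _ _ (by omega), spliceMid, dif_pos h]
  · rw [splice, spliceMid, dif_neg (by omega), dif_neg h]
    have hidx : n + 1 + j - (m + 1) = j - (m - n) := by omega
    exact eq_of_heq ((cast_heq _ _).trans (by rw [hidx]; exact (cast_heq _ _).symm))

theorem tensFun_splice {n m : ℕ} (hnm : n ≤ m) (ξ : (∀ j : Fin (n + 1), X j) → ℂ)
    (η : (∀ j : ℕ, X (n + 1 + j)) → ℂ) (x : ∀ j : ℕ, X j) (w : ∀ j : ℕ, X (m + 1 + j)) :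
    tensFun n ξ η (splice m (fun j : Fin (m + 1) => x j) w)
      = ξ (fun j : Fin (n + 1) => x j) * η (spliceMid hnm (fun j => x (n + 1 + j)) w) := by
  have hhead : (fun j : Fin (n + 1) => splice m (fun i : Fin (m + 1) => x i) w j)
      = fun j : Fin (n + 1) => x j :=
    funext fun j => splice_lt _ _ (by omega)
  rw [tensFun, hhead, funext (splice_add_eq_spliceMid hnm x w)]

theorem PnFun_tensFun [∀ j, MeasurableSpace (X j)] (νtail : ∀ k, Measure (∀ j : ℕ, X (k + j)))
    {n m : ℕ} (hnm : n ≤ m) (ξ : (∀ j : Fin (n + 1), X j) → ℂ)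
    (η : (∀ j : ℕ, X (n + 1 + j)) → ℂ) :
    PnFun νtail m (tensFun n ξ η) = tensFun n ξ (PtailFun νtail hnm η) := by
  funext x
  simp only [PnFun, iotaFun, piFun, tensFun_splice hnm, integral_const_mul]
  rfl

theorem stmt9_general (p : ℝ≥0∞) (hp' : p ≠ ∞)
    {X : ℕ → Type*} [∀ j, MeasurableSpace (X j)]
    (μ : ∀ j, Measure (X j)) [∀ j, IsProbabilityMeasure (μ j)]
    (νall : Measure (∀ j, X j))
    (hνall : IsProductMeasure μ νall)
    (νtail : ∀ k, Measure (∀ j : ℕ, X (k + j)))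
    (hνtail : ∀ k, IsProductMeasure (fun j => μ (k + j)) (νtail k))
    {n m : ℕ} (hnm : n ≤ m)
    (ξ : (∀ j : Fin (n + 1), X j) → ℂ) (hξ : MemLp ξ p (muLe μ n))
    (η : (∀ j : ℕ, X (n + 1 + j)) → ℂ) (hη : MemLp η p (νtail (n + 1))) :
    MemLp (tensFun n ξ η) p νall ∧
      eLpNorm (tensFun n ξ η) p νall
        = eLpNorm ξ p (muLe μ n) * eLpNorm η p (νtail (n + 1)) ∧
      PnFun νtail m (tensFun n ξ η) = tensFun n ξ (PtailFun νtail hnm η) := by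
  obtain rfl := hνall.eq_infinitePi
  rw [(hνtail (n + 1)).eq_infinitePi] at hη ⊢
  have hsplit := measurePreserving_restrict_prod_shift μ n
  have htens : tensFun n ξ η = (fun q => ξ q.1 * η q.2) ∘
      fun x : ∀ j, X j => ((fun j : Fin (n + 1) => x j), fun j => x (n + 1 + j)) := rfl
  refine ⟨?_, ?_, PnFun_tensFun νtail hnm ξ η⟩
  · rw [htens]
    exact (hξ.prod_mul hp' hη).comp_measurePreserving hsplit
  · rw [htens, eLpNorm_comp_measurePreserving (hξ.prod_mul hp' hη).1 hsplit,
      eLpNorm_prod_mul hp' hξ.1 hη.1]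

theorem stmt9 (p : ℝ≥0∞) (hp : 1 ≤ p) (hp' : p ≠ ∞)
    {X : ℕ → Type*} [∀ j, MeasurableSpace (X j)]
    (μ : ∀ j, Measure (X j)) [∀ j, IsProbabilityMeasure (μ j)]
    (νall : Measure (∀ j, X j)) [IsProbabilityMeasure νall]
    (hνall : IsProductMeasure μ νall)
    (νtail : ∀ k, Measure (∀ j : ℕ, X (k + j))) [∀ k, IsProbabilityMeasure (νtail k)]
    (hνtail : ∀ k, IsProductMeasure (fun j => μ (k + j)) (νtail k))
    {n m : ℕ} (hnm : n ≤ m)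
    (ξ : (∀ j : Fin (n + 1), X j) → ℂ) (hξ : MemLp ξ p (muLe μ n))
    (η : (∀ j : ℕ, X (n + 1 + j)) → ℂ) (hη : MemLp η p (νtail (n + 1))) :
    MemLp (tensFun n ξ η) p νall ∧
      eLpNorm (tensFun n ξ η) p νall
        = eLpNorm ξ p (muLe μ n) * eLpNorm η p (νtail (n + 1)) ∧
      PnFun νtail m (tensFun n ξ η) = tensFun n ξ (PtailFun νtail hnm η) :=
  stmt9_general p hp' μ νall hνall νtail hνtail hnm ξ hξ η hη
end
end
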